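/- Let n be a natural number and let f:(0,∞)→ℝ be continuously differentiable with f' > 0 everywhere. Then for every Hermitian positive definite n×n complex matrix x, the linear map D_f(x) on n×n complex matrices is invertible, the quadratic form h ↦ Tr(h* D_f(x) h) is positive definite on n×n complex matrices, and Tr(h* D_f(x)⁻¹ h) = Σ_{i,j} |⟨h e_i, e_j⟩|² · (λ_i − λ_j)/(f(λ_i) − f(λ_j)) for every n×n complex matrix h, where (e_i) is an orthonormal eigenbasis of x with eigenvalues (λ_i) and the quotient is interpreted as 1/f'(λ_i) when λ_i = λ_j. -/
import Mathlib

open Matrix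
open scoped ComplexOrder

/-- The divided difference `[t,s]_f` of a differentiable function `f`. -/
noncomputable def dd (f : ℝ → ℝ) (t s : ℝ) : ℝ :=
  if t = s then deriv f t else (f t - f s) / (t - s)

/-- The Fréchet differential superoperator `D_f(x)`: Hadamard multiplication with the
Löwner matrix `([λ_i,λ_j]_f)` in an orthonormal eigenbasis of `x`
(junk value `0` if `x` is not Hermitian). -/
noncomputable def Dmap (f : ℝ → ℝ) {m : Type*} [Fintype m] [DecidableEq m]
    (x h : Matrix m m ℂ) : Matrix m m ℂ :=
  if hx : x.IsHermitian then
    (hx.eigenvectorUnitary : Matrix m m ℂ) *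
      ((Matrix.of fun i j => ((dd f (hx.eigenvalues i) (hx.eigenvalues j) : ℝ) : ℂ)).hadamard
        ((hx.eigenvectorUnitary : Matrix m m ℂ)ᴴ * h * (hx.eigenvectorUnitary : Matrix m m ℂ))) *
      (hx.eigenvectorUnitary : Matrix m m ℂ)ᴴ
  else 0

/-- The inverse superoperator `D_f(x)⁻¹`: Hadamard multiplication with the entrywise
reciprocal `([λ_i,λ_j]_f⁻¹)` of the Löwner matrix in an orthonormal eigenbasis of `x`. -/
noncomputable def DmapInv (f : ℝ → ℝ) {m : Type*} [Fintype m] [DecidableEq m]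
    (x h : Matrix m m ℂ) : Matrix m m ℂ :=
  if hx : x.IsHermitian then
    (hx.eigenvectorUnitary : Matrix m m ℂ) *
      ((Matrix.of fun i j => (((dd f (hx.eigenvalues i) (hx.eigenvalues j))⁻¹ : ℝ) : ℂ)).hadamard
        ((hx.eigenvectorUnitary : Matrix m m ℂ)ᴴ * h * (hx.eigenvectorUnitary : Matrix m m ℂ))) *
      (hx.eigenvectorUnitary : Matrix m m ℂ)ᴴ
  else 0

/-- Functional calculus `f(x)` for Hermitian matrices (junk value `0` otherwise). -/
noncomputable def mfun (f : ℝ → ℝ) {m : Type*} [Fintype m] [DecidableEq m]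
    (x : Matrix m m ℂ) : Matrix m m ℂ :=
  if hx : x.IsHermitian then
    (hx.eigenvectorUnitary : Matrix m m ℂ) *
      Matrix.diagonal (fun i => ((f (hx.eigenvalues i) : ℝ) : ℂ)) *
      (hx.eigenvectorUnitary : Matrix m m ℂ)ᴴ
  else 0

/-- The bivariate function `g(t,s) = (s-t)/(f(s)-f(t))`, with `g(t,t) = 1/f'(t)`. -/
noncomputable def gfun (f : ℝ → ℝ) (t s : ℝ) : ℝ :=
  if t = s then (deriv f t)⁻¹ else (s - t) / (f s - f t)

/-- `Σ_{i,j} |⟨h e_i, d_j⟩|² g(λ_i, μ_j)`, where `(e_i, λ_i)` and `(d_j, μ_j)` are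
orthonormal eigenbases and eigenvalues of `x` and `y`; this equals `Tr h* g(L_x, R_y) h`. -/
noncomputable def Qg (f : ℝ → ℝ) {m : Type*} [Fintype m] [DecidableEq m]
    (h x y : Matrix m m ℂ) : ℝ :=
  if hx : x.IsHermitian then
    if hy : y.IsHermitian then
      ∑ i, ∑ j,
        ‖((hy.eigenvectorUnitary : Matrix m m ℂ)ᴴ * h *
            (hx.eigenvectorUnitary : Matrix m m ℂ)) j i‖ ^ 2 *
          gfun f (hx.eigenvalues i) (hy.eigenvalues j)
    else 0
  else 0

/-- A function `g : (0,∞) → ℝ` is operator convex if for all positive definite complex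
matrices `A`, `B` of any size and `c ∈ [0,1]` one has
`g(cA + (1-c)B) ≼ c g(A) + (1-c) g(B)` in the Loewner order. -/
def IsOperatorConvex (g : ℝ → ℝ) : Prop :=
  ∀ (m : ℕ) (A B : Matrix (Fin m) (Fin m) ℂ), A.PosDef → B.PosDef →
    ∀ c : ℝ, c ∈ Set.Icc (0 : ℝ) 1 →
      (c • mfun g A + (1 - c) • mfun g B - mfun g (c • A + (1 - c) • B)).PosSemidef

section Aux
variable {m : Type*} [Fintype m] [DecidableEq m]

omit [Fintype m] [DecidableEq m] in
lemma hadamard_cancel (C C' : m → m → ℂ) (hCC : ∀ i j, C i j * C' i j = 1)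
    (M : Matrix m m ℂ) :
    (Matrix.of C).hadamard ((Matrix.of C').hadamard M) = M := by
  ext i j
  simp only [Matrix.hadamard_apply, Matrix.of_apply, ← mul_assoc, hCC, one_mul]

lemma conj_sandwich {U X : Matrix m m ℂ} (h1 : Uᴴ * U = 1) :
    Uᴴ * (U * X * Uᴴ) * U = X := by
  rw [mul_assoc U X, ← mul_assoc Uᴴ U, h1, one_mul, mul_assoc, h1, mul_one]

lemma sandwich2 {U X : Matrix m m ℂ} (h2 : U * Uᴴ = 1) :
    U * (Uᴴ * X * U) * Uᴴ = X := by
  rw [mul_assoc Uᴴ X, ← mul_assoc U Uᴴ, h2, one_mul, mul_assoc, h2, mul_one]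

/-- key trace formula -/
lemma trace_formula (U h : Matrix m m ℂ) (C : m → m → ℝ) :
    Matrix.trace (hᴴ * (U * ((Matrix.of fun i j => ((C i j : ℝ) : ℂ)).hadamard
        (Uᴴ * h * U)) * Uᴴ)) =
      ((∑ i, ∑ j, C j i * ‖(Uᴴ * h * U) j i‖ ^ 2 : ℝ) : ℂ) := by
  set M := Uᴴ * h * U with hM
  set N := (Matrix.of fun i j => ((C i j : ℝ) : ℂ)).hadamard M with hN
  have e1 : hᴴ * (U * N * Uᴴ) = hᴴ * (U * N) * Uᴴ := by rw [mul_assoc, mul_assoc, mul_assoc]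
  rw [e1, Matrix.trace_mul_cycle]
  have e2 : Uᴴ * hᴴ * (U * N) = Mᴴ * N := by
    rw [hM, Matrix.conjTranspose_mul, Matrix.conjTranspose_mul, Matrix.conjTranspose_conjTranspose,
      mul_assoc, mul_assoc, mul_assoc]
  rw [e2]
  rw [Matrix.trace]
  push_cast
  refine Finset.sum_congr rfl fun i _ => ?_
  rw [Matrix.diag_apply, Matrix.mul_apply]
  refine Finset.sum_congr rfl fun j _ => ?_
  rw [Matrix.conjTranspose_apply, hN, Matrix.hadamard_apply, Matrix.of_apply,
    ← mul_assoc, mul_comm (star (M j i)) _, mul_assoc]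
  congr 1
  simpa using Complex.conj_mul' (M j i)

lemma Phi_inv {U : Matrix m m ℂ} (h1 : Uᴴ * U = 1) (h2 : U * Uᴴ = 1)
    (C C' : m → m → ℂ) (hCC : ∀ i j, C i j * C' i j = 1) (h : Matrix m m ℂ) :
    U * ((Matrix.of C).hadamard
        (Uᴴ * (U * ((Matrix.of C').hadamard (Uᴴ * h * U)) * Uᴴ) * U)) * Uᴴ = h := by
  rw [conj_sandwich h1, hadamard_cancel C C' hCC, sandwich2 h2]

lemma dd_pos {f : ℝ → ℝ} (hsmooth : ContDiffOn ℝ 1 f (Set.Ioi (0 : ℝ)))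
    (hpos : ∀ t ∈ Set.Ioi (0 : ℝ), 0 < deriv f t)
    {t s : ℝ} (ht : 0 < t) (hs : 0 < s) : 0 < dd f t s := by
  have hmono : StrictMonoOn f (Set.Ioi (0 : ℝ)) :=
    strictMonoOn_of_deriv_pos (convex_Ioi 0) hsmooth.continuousOn
      (by simpa [interior_Ioi] using hpos)
  unfold dd
  split_ifs with hts
  · exact hpos t ht
  · rcases lt_or_gt_of_ne hts with hlt | hgt
    · have h1 : f t < f s := hmono ht hs hlt
      exact div_pos_of_neg_of_neg (by linarith) (by linarith)
    · have h1 : f s < f t := hmono hs ht hgt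
      exact div_pos (by linarith) (by linarith)

lemma ddinv_eq (f : ℝ → ℝ) (t s : ℝ) :
    (dd f t s)⁻¹ = if s = t then (deriv f s)⁻¹ else (s - t) / (f s - f t) := by
  unfold dd
  by_cases h : t = s
  · subst h; simp
  · rw [if_neg h, if_neg (Ne.symm h), inv_div]
    rw [show t - s = -(s - t) by ring, show f t - f s = -(f s - f t) by ring, neg_div_neg_eq]

end Aux

/-- If `f' > 0` on `(0,∞)` then `D_f(x)` is invertible (with inverse `DmapInv f x`), the
quadratic form `h ↦ Tr h* D_f(x) h` is positive definite, and `Tr h* D_f(x)⁻¹ h` is given by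
the reciprocal Löwner matrix formula. -/
theorem stmt_8 (n : ℕ) (f : ℝ → ℝ)
    (hsmooth : ContDiffOn ℝ 1 f (Set.Ioi (0 : ℝ)))
    (hpos : ∀ t ∈ Set.Ioi (0 : ℝ), 0 < deriv f t)
    (x : Matrix (Fin n) (Fin n) ℂ) (hx : x.PosDef) :
    Function.Bijective (Dmap f x) ∧
    (∀ h : Matrix (Fin n) (Fin n) ℂ, Dmap f x (DmapInv f x h) = h) ∧
    (∀ h : Matrix (Fin n) (Fin n) ℂ, h ≠ 0 → 0 < (Matrix.trace (hᴴ * Dmap f x h)).re) ∧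
    (∀ h : Matrix (Fin n) (Fin n) ℂ,
      (Matrix.trace (hᴴ * DmapInv f x h)).re =
        ∑ i, ∑ j,
          ‖((hx.isHermitian.eigenvectorUnitary : Matrix (Fin n) (Fin n) ℂ)ᴴ * h *
              (hx.isHermitian.eigenvectorUnitary : Matrix (Fin n) (Fin n) ℂ)) j i‖ ^ 2 *
            (if hx.isHermitian.eigenvalues i = hx.isHermitian.eigenvalues j then
              (deriv f (hx.isHermitian.eigenvalues i))⁻¹
            else
              (hx.isHermitian.eigenvalues i - hx.isHermitian.eigenvalues j) /
                (f (hx.isHermitian.eigenvalues i) - f (hx.isHermitian.eigenvalues j)))) := by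
  have hH : x.IsHermitian := hx.isHermitian
  set U : Matrix (Fin n) (Fin n) ℂ := (hH.eigenvectorUnitary : Matrix (Fin n) (Fin n) ℂ) with hU
  have h1 : Uᴴ * U = 1 := by
    rw [← Matrix.star_eq_conjTranspose]
    exact Matrix.mem_unitaryGroup_iff'.mp (hH.eigenvectorUnitary).2
  have h2 : U * Uᴴ = 1 := by
    rw [← Matrix.star_eq_conjTranspose]
    exact Matrix.mem_unitaryGroup_iff.mp (hH.eigenvectorUnitary).2
  set lam := hH.eigenvalues with hlam
  have hlampos : ∀ i, 0 < lam i := fun i => hx.eigenvalues_pos i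
  set C : Fin n → Fin n → ℝ := fun i j => dd f (lam i) (lam j) with hC
  have hCpos : ∀ i j, 0 < C i j := fun i j => dd_pos hsmooth hpos (hlampos i) (hlampos j)
  have hDmap : ∀ h, Dmap f x h =
      U * ((Matrix.of fun i j => ((C i j : ℝ) : ℂ)).hadamard (Uᴴ * h * U)) * Uᴴ := by
    intro h; rw [Dmap, dif_pos hH]
  have hDmapInv : ∀ h, DmapInv f x h =
      U * ((Matrix.of fun i j => (((C i j)⁻¹ : ℝ) : ℂ)).hadamard (Uᴴ * h * U)) * Uᴴ := by
    intro h; rw [DmapInv, dif_pos hH]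
  have hCC : ∀ i j, (((C i j : ℝ) : ℂ)) * (((C i j)⁻¹ : ℝ) : ℂ) = 1 := by
    intro i j
    rw [← Complex.ofReal_mul, mul_inv_cancel₀ (hCpos i j).ne', Complex.ofReal_one]
  have hCC' : ∀ i j, ((((C i j)⁻¹ : ℝ) : ℂ)) * ((C i j : ℝ) : ℂ) = 1 := by
    intro i j; rw [mul_comm]; exact hCC i j
  have key : ∀ h, Dmap f x (DmapInv f x h) = h := by
    intro h
    rw [hDmapInv, hDmap]
    exact Phi_inv h1 h2 _ _ hCC h
  have key2 : ∀ h, DmapInv f x (Dmap f x h) = h := by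
    intro h
    rw [hDmapInv, hDmap]
    exact Phi_inv h1 h2 _ _ hCC' h
  refine ⟨⟨Function.LeftInverse.injective key2, Function.RightInverse.surjective key⟩, key, ?_, ?_⟩
  · -- positivity
    intro h hne
    rw [hDmap, trace_formula, Complex.ofReal_re]
    have hM : Uᴴ * h * U ≠ 0 := by
      intro h0
      apply hne
      have := sandwich2 (X := h) h2
      rw [show Uᴴ * h * U = 0 from h0, mul_zero, zero_mul] at this
      exact this.symm
    obtain ⟨a, b, hab⟩ : ∃ a b, (Uᴴ * h * U) a b ≠ 0 := by
      by_contra hc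
      push_neg at hc
      exact hM (by ext a b; simpa using hc a b)
    refine Finset.sum_pos' (fun i _ => Finset.sum_nonneg fun j _ =>
      mul_nonneg (hCpos j i).le (by positivity)) ⟨b, Finset.mem_univ b, ?_⟩
    refine Finset.sum_pos' (fun j _ => mul_nonneg (hCpos j b).le (by positivity))
      ⟨a, Finset.mem_univ a, ?_⟩
    exact mul_pos (hCpos a b) (pow_pos (norm_pos_iff.mpr hab) 2)
  · -- formula
    intro h
    rw [hDmapInv, trace_formula, Complex.ofReal_re]
    refine Finset.sum_congr rfl fun i _ => Finset.sum_congr rfl fun j _ => ?_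
    rw [mul_comm]
    congr 1
    rw [hC, ddinv_eq]
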